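/- arXiv:2006.12096 — 2 statements merged into one kernel-verified Lean document; each statement's English description precedes it below -/
import Mathlib

section
/- Suppose g : ℝ² → ℝ is 1-periodic in y₁, and there exist constants N, C > 0 and γ ∈ (0,1) such that |g(y) − N| ≤ C e^{−γ y₂} for all y₂ > 0. Define g^ε(x) = g(x/ε) on Ω_ff = (0,L) × (0,h). Then ‖g^ε − N‖_{L²(Ω_ff)} ≤ C' ε^{1/2} for a constant C' independent of ε ∈ (0,1). -/
open MeasureTheory Set Real

/-! Squaring the decay bound gives `(g(x/ε) - N)² ≤ C² e^{-2γ x₂/ε}` on the free-flow domain.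
Extending the `x₂`-integration from `(0, h)` to `(0, ∞)` only increases the integral of this
majorant, and `∫₀^∞ e^{-2γ x₂/ε} dx₂ = ε / (2γ)`, so the squared `L²` norm is at most
`C² L ε / (2γ)`. -/

lemma integrableOn_exp_neg_mul_snd {s : Set ℝ} (hs : volume s ≠ ⊤) {k : ℝ} (hk : 0 < k) :
    IntegrableOn (fun x : ℝ × ℝ => exp (-k * x.2)) (s ×ˢ Ioi 0) := by
  rw [IntegrableOn, Measure.volume_eq_prod, ← Measure.prod_restrict]
  simpa only [one_mul] using Integrable.mul_prod (integrableOn_const (C := (1 : ℝ)) hs)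
    (integrableOn_exp_mul_Ioi (neg_lt_zero.2 hk) 0)

lemma setIntegral_exp_neg_mul_snd (s : Set ℝ) {k : ℝ} (hk : 0 < k) :
    ∫ x in s ×ˢ Ioi 0, exp (-k * x.2) = volume.real s / k := by
  have hprod := setIntegral_prod_mul (μ := volume) (ν := volume) (fun _ : ℝ => (1 : ℝ))
    (fun y => exp (-k * y)) s (Ioi 0)
  rw [← Measure.volume_eq_prod] at hprod
  simp only [one_mul] at hprod
  rw [hprod, setIntegral_const, integral_exp_mul_Ioi (neg_lt_zero.2 hk), smul_eq_mul, mul_one,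
    mul_zero, exp_zero]
  field_simp

theorem integral_sq_comp_div_le_of_abs_le_exp {u : ℝ × ℝ → ℝ} {C γ ε : ℝ} {s t : Set ℝ}
    (hγ : 0 < γ) (hε : 0 < ε) (hs_meas : MeasurableSet s) (ht_meas : MeasurableSet t)
    (hs : volume s ≠ ⊤) (ht : t ⊆ Ioi 0)
    (hu : ∀ y : ℝ × ℝ, 0 < y.2 → |u y| ≤ C * exp (-γ * y.2)) :
    ∫ x in s ×ˢ t, u (x.1 / ε, x.2 / ε) ^ 2 ≤ C ^ 2 * volume.real s * ε / (2 * γ) := by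
  set k := 2 * γ / ε
  have hk : 0 < k := by positivity
  have hkε : k * ε = 2 * γ := div_mul_cancel₀ _ hε.ne'
  have hpointwise : ∀ x ∈ s ×ˢ t, u (x.1 / ε, x.2 / ε) ^ 2 ≤ C ^ 2 * exp (-k * x.2) := by
    rintro ⟨x₁, x₂⟩ ⟨-, hx₂⟩
    have hdecay := hu (x₁ / ε, x₂ / ε) (div_pos (ht hx₂) hε)
    calc u (x₁ / ε, x₂ / ε) ^ 2 ≤ (C * exp (-γ * (x₂ / ε))) ^ 2 := sq_le_sq' (abs_le.1 hdecay).1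
          (abs_le.1 hdecay).2
      _ = C ^ 2 * exp (-k * x₂) := by
          rw [mul_pow, ← exp_nat_mul]
          congr 2
          field_simp
          linear_combination x₂ * hkε
  have hmajorant : IntegrableOn (fun x : ℝ × ℝ => C ^ 2 * exp (-k * x.2)) (s ×ˢ Ioi 0) :=
    (integrableOn_exp_neg_mul_snd hs hk).const_mul _
  calc ∫ x in s ×ˢ t, u (x.1 / ε, x.2 / ε) ^ 2
      ≤ ∫ x in s ×ˢ t, C ^ 2 * exp (-k * x.2) :=
        integral_mono_of_nonneg (ae_of_all _ fun _ => sq_nonneg _)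
          (hmajorant.mono_set (prod_mono subset_rfl ht))
          ((ae_restrict_iff' (hs_meas.prod ht_meas)).2 (ae_of_all _ hpointwise))
    _ ≤ ∫ x in s ×ˢ Ioi 0, C ^ 2 * exp (-k * x.2) :=
        setIntegral_mono_set hmajorant (ae_of_all _ fun _ => by positivity)
          (prod_mono subset_rfl ht).eventuallyLE
    _ = C ^ 2 * volume.real s * ε / (2 * γ) := by
        rw [integral_const_mul, setIntegral_exp_neg_mul_snd s hk]
        field_simp
        linear_combination (-(C ^ 2 * volume.real s)) * hkε

theorem boundary_layer_stabilization_above_general (L h : ℝ) (hL : 0 < L)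
    (g : ℝ × ℝ → ℝ)
    (N C γ : ℝ) (hC : 0 < C) (hγ : γ ∈ Ioo (0:ℝ) 1)
    (hdec : ∀ y : ℝ × ℝ, 0 < y.2 → |g y - N| ≤ C * Real.exp (-γ * y.2)) :
    ∃ C' > 0, ∀ ε ∈ Ioo (0:ℝ) 1,
      Real.sqrt (∫ x in Ioo 0 L ×ˢ Ioo 0 h, (g (x.1 / ε, x.2 / ε) - N) ^ 2) ≤
        C' * Real.sqrt ε := by
  obtain ⟨hγ₀, -⟩ := hγ
  refine ⟨C * sqrt (L / (2 * γ)), by positivity, fun ε ⟨hε₀, _⟩ => ?_⟩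
  have hL2 : ∫ x in Ioo 0 L ×ˢ Ioo 0 h, (g (x.1 / ε, x.2 / ε) - N) ^ 2
      ≤ C ^ 2 * L * ε / (2 * γ) := by
    simpa only [Real.volume_real_Ioo_of_le hL.le, sub_zero] using
      integral_sq_comp_div_le_of_abs_le_exp (u := fun y => g y - N) (s := Ioo 0 L) hγ₀ hε₀
        measurableSet_Ioo measurableSet_Ioo measure_Ioo_lt_top.ne Ioo_subset_Ioi_self hdec
  calc sqrt (∫ x in Ioo 0 L ×ˢ Ioo 0 h, (g (x.1 / ε, x.2 / ε) - N) ^ 2)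
      ≤ sqrt (C ^ 2 * (L / (2 * γ)) * ε) :=
        sqrt_le_sqrt (by rwa [mul_div_assoc', div_mul_eq_mul_div])
    _ = C * sqrt (L / (2 * γ)) * sqrt ε := by
        rw [sqrt_mul (by positivity), sqrt_mul (sq_nonneg _), sqrt_sq hC.le]

/-- Stabilization estimate above the interface: if `g` is 1-periodic in `y₁`
and `|g(y) − N| ≤ C e^{−γ y₂}` for `y₂ > 0`, then `g^ε(x) = g(x/ε)` satisfies
`‖g^ε − N‖_{L²((0,L)×(0,h))} ≤ C' ε^{1/2}` with `C'` independent of `ε ∈ (0,1)`. -/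
theorem boundary_layer_stabilization_above (L h : ℝ) (hL : 0 < L) (hh : 0 < h)
    (g : ℝ × ℝ → ℝ) (hmeas : Measurable g)
    (hper : ∀ y : ℝ × ℝ, g (y.1 + 1, y.2) = g y)
    (N C γ : ℝ) (hC : 0 < C) (hγ : γ ∈ Ioo (0:ℝ) 1)
    (hdec : ∀ y : ℝ × ℝ, 0 < y.2 → |g y - N| ≤ C * Real.exp (-γ * y.2)) :
    ∃ C' > 0, ∀ ε ∈ Ioo (0:ℝ) 1,
      Real.sqrt (∫ x in Ioo 0 L ×ˢ Ioo 0 h, (g (x.1 / ε, x.2 / ε) - N) ^ 2) ≤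
        C' * Real.sqrt ε :=
  boundary_layer_stabilization_above_general L h hL g N C γ hC hγ hdec
end

section
/- Let f : Z⁻ → ℝ be 1-periodic in y₁ with e^{γ|y₂|} f ∈ L²(Z⁻) for some γ ∈ (0,1), where Z⁻ ⊂ (0,1) × (−∞,0). Define f^ε(x) = f(x₁/ε, −(x₂+H)/ε) for x ∈ Ω_pm^ε = perforated (0,L)×(−H,0), extended by zero. Then ‖f^ε‖_{L²(Ω_pm)} ≤ C ε^{1/2}, and moreover for any δ > 0, ‖f^ε‖_{L²((0,L)×(−H+δ,0))} ≤ C_δ e^{−γδ/(2ε)}, i.e. f^ε is exponentially small away from the lower boundary {x₂ = −H}. -/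
open MeasureTheory Set Real
open scoped ENNReal

/-!
The substitution `y = (x₁/ε, -(x₂+H)/ε)` multiplies Lebesgue measure by `ε²` and maps
`(0,L) × (-H,0)` into the strip `(0, L/ε) × (-∞, 0)`, which is covered by `⌈L/ε⌉ ≤ L/ε + 1`
translates of the periodicity cell. Hence `∫ (f^ε)² ≤ ε (L + 1) ∫_cell (e^{γ|y₂|} f)²`.
On `x₂ > -H + δ` the new variable satisfies `|y₂| ≥ δ/ε`, so comparing `f²` with the weighted
`(e^{γ|y₂|} f)²` gains the extra factor `e^{-2γδ/ε}`.
-/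

theorem Real.map_volume_mul_add {a : ℝ} (ha : a ≠ 0) (b : ℝ) :
    Measure.map (fun x => a * x + b) volume = ENNReal.ofReal |a⁻¹| • volume := by
  rw [← Function.comp_def (· + b) (a * ·),
    ← Measure.map_map (measurable_add_const b) (measurable_const_mul a),
    Real.map_volume_mul_left ha, Measure.map_smul, map_add_right_eq_self]

theorem map_volume_rescale {ε : ℝ} (hε : 0 < ε) (H : ℝ) :
    Measure.map (fun x : ℝ × ℝ => (x.1 / ε, -(x.2 + H) / ε)) volume
      = ENNReal.ofReal (ε ^ 2) • volume := by
  have h₁ : Measure.map (· / ε) volume = ENNReal.ofReal ε • volume := by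
    rw [show (· / ε) = fun x : ℝ => ε⁻¹ * x + 0 by ext; ring,
      Real.map_volume_mul_add (inv_ne_zero hε.ne'), inv_inv, abs_of_pos hε]
  have h₂ : Measure.map (fun x => -(x + H) / ε) volume = ENNReal.ofReal ε • volume := by
    rw [show (fun x => -(x + H) / ε) = fun x : ℝ => -ε⁻¹ * x + -(H / ε) by ext; ring,
      Real.map_volume_mul_add (neg_ne_zero.2 (inv_ne_zero hε.ne')), inv_neg, inv_inv, abs_neg,
      abs_of_pos hε]
  rw [Measure.volume_eq_prod]
  change Measure.map (Prod.map (· / ε) (fun x => -(x + H) / ε)) _ = _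
  rw [← Measure.map_prod_map _ _ (by fun_prop) (by fun_prop),
    h₁, h₂, Measure.prod_smul_left, Measure.prod_smul_right, smul_smul,
    ← ENNReal.ofReal_mul hε.le, sq]

theorem setLIntegral_rescale_le {g : ℝ × ℝ → ℝ≥0∞} (hg : Measurable g) {ε : ℝ} (hε : 0 < ε)
    (L H : ℝ) :
    ∫⁻ x in Ioo 0 L ×ˢ Ioo (-H) 0, g (x.1 / ε, -(x.2 + H) / ε)
      ≤ ENNReal.ofReal (ε ^ 2) * ∫⁻ y in Ioo 0 (L / ε) ×ˢ Iio 0, g y := by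
  have hsub : Ioo 0 L ×ˢ Ioo (-H) 0 ⊆
      (fun x : ℝ × ℝ => (x.1 / ε, -(x.2 + H) / ε)) ⁻¹' (Ioo 0 (L / ε) ×ˢ Iio 0) := by
    rintro ⟨a, b⟩ ⟨ha, hb⟩
    exact ⟨⟨div_pos ha.1 hε, div_lt_div_of_pos_right ha.2 hε⟩,
      div_neg_of_neg_of_pos (by linarith [hb.1]) hε⟩
  rw [← smul_eq_mul, ← lintegral_smul_measure, ← Measure.restrict_smul, ← map_volume_rescale hε H,
    setLIntegral_map (measurableSet_Ioo.prod measurableSet_Iio) hg (by fun_prop)]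
  exact lintegral_mono_set hsub

theorem setLIntegral_Ioo_prod_le_ceil_mul_of_periodic {g : ℝ × ℝ → ℝ≥0∞}
    (hg : ∀ b, Function.Periodic (fun a => g (a, b)) 1) (T : ℝ) (t : Set ℝ) :
    ∫⁻ y in Ioo 0 T ×ˢ t, g y ≤ ⌈T⌉₊ * ∫⁻ y in Ioo 0 1 ×ˢ t, g y := by
  have cell (k : ℕ) : ∫⁻ y in Ico (k : ℝ) (k + 1) ×ˢ t, g y = ∫⁻ y in Ioo 0 1 ×ˢ t, g y := by
    have hpre : (· + ((k : ℝ), (0 : ℝ))) ⁻¹' (Ico (k : ℝ) (k + 1) ×ˢ t) = Ico 0 1 ×ˢ t := by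
      ext y; simp [add_comm _ (k : ℝ)]
    rw [← (measurePreserving_add_right volume ((k : ℝ), (0 : ℝ))).setLIntegral_comp_preimage_emb
      (measurableEmbedding_addRight _), hpre,
      setLIntegral_congr
        (Measure.volume_eq_prod ℝ ℝ ▸ Measure.set_prod_ae_eq Ioo_ae_eq_Ico.symm .rfl)]
    refine lintegral_congr fun y => ?_
    simpa [Prod.add_def] using (hg y.2).nat_mul k y.1
  have cover : Ioo 0 T ×ˢ t ⊆ ⋃ k : Fin ⌈T⌉₊, Ico (k : ℝ) (k + 1) ×ˢ t := by
    rintro ⟨a, b⟩ ⟨ha, hb⟩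
    exact mem_iUnion.2 ⟨⟨⌊a⌋₊, (Nat.floor_lt ha.1.le).2 (ha.2.trans_le (Nat.le_ceil T))⟩,
      ⟨Nat.floor_le ha.1.le, Nat.lt_floor_add_one a⟩, hb⟩
  calc ∫⁻ y in Ioo 0 T ×ˢ t, g y
      ≤ ∫⁻ y in ⋃ k : Fin ⌈T⌉₊, Ico (k : ℝ) (k + 1) ×ˢ t, g y := lintegral_mono_set cover
    _ ≤ ∑' k : Fin ⌈T⌉₊, ∫⁻ y in Ico (k : ℝ) (k + 1) ×ˢ t, g y := lintegral_iUnion_le _ _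
    _ = ⌈T⌉₊ * ∫⁻ y in Ioo 0 1 ×ˢ t, g y := by simp [cell]

theorem setLIntegral_rescale_le_of_periodic {g : ℝ × ℝ → ℝ≥0∞} (hg : Measurable g)
    (hper : ∀ b, Function.Periodic (fun a => g (a, b)) 1) {L : ℝ} (hL : 0 ≤ L) (H : ℝ)
    {ε : ℝ} (hε : 0 < ε) (hε₁ : ε ≤ 1) :
    ∫⁻ x in Ioo 0 L ×ˢ Ioo (-H) 0, g (x.1 / ε, -(x.2 + H) / ε)
      ≤ ENNReal.ofReal (ε * (L + 1)) * ∫⁻ y in Ioo 0 1 ×ˢ Iio 0, g y := by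
  have hceil : ε ^ 2 * ⌈L / ε⌉₊ ≤ ε * (L + 1) := calc
    ε ^ 2 * ⌈L / ε⌉₊ ≤ ε ^ 2 * (L / ε + 1) := by
      gcongr; exact (Nat.ceil_lt_add_one (by positivity)).le
    _ = ε * (L + ε) := by field_simp
    _ ≤ ε * (L + 1) := by gcongr
  calc ∫⁻ x in Ioo 0 L ×ˢ Ioo (-H) 0, g (x.1 / ε, -(x.2 + H) / ε)
      ≤ ENNReal.ofReal (ε ^ 2) * ∫⁻ y in Ioo 0 (L / ε) ×ˢ Iio 0, g y :=
        setLIntegral_rescale_le hg hε L H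
    _ ≤ ENNReal.ofReal (ε ^ 2) * (⌈L / ε⌉₊ * ∫⁻ y in Ioo 0 1 ×ˢ Iio 0, g y) := by
        gcongr; exact setLIntegral_Ioo_prod_le_ceil_mul_of_periodic hper _ _
    _ ≤ ENNReal.ofReal (ε * (L + 1)) * ∫⁻ y in Ioo 0 1 ×ˢ Iio 0, g y := by
        rw [← mul_assoc, ← ENNReal.ofReal_natCast, ← ENNReal.ofReal_mul (by positivity)]
        gcongr

theorem sq_le_exp_mul_sq_of_le_abs {γ r y : ℝ} (hγ : 0 ≤ γ) (hr : r ≤ |y|) (z : ℝ) :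
    z ^ 2 ≤ exp (-(γ * r)) ^ 2 * (exp (γ * |y|) * z) ^ 2 := by
  rw [← mul_pow, ← mul_assoc, ← exp_add, mul_pow]
  exact le_mul_of_one_le_left (sq_nonneg z) (one_le_pow₀ (one_le_exp (by nlinarith)))

theorem setIntegral_rescale_sq_le {f : ℝ × ℝ → ℝ} (hf : Measurable f)
    (hper : ∀ b, Function.Periodic (fun a => f (a, b)) 1) {γ : ℝ} (hγ : 0 ≤ γ)
    (hw : IntegrableOn (fun y : ℝ × ℝ => (exp (γ * |y.2|) * f y) ^ 2) (Ioo 0 1 ×ˢ Iio 0))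
    {L : ℝ} (hL : 0 ≤ L) (H : ℝ) {δ : ℝ} (hδ : 0 ≤ δ) {ε : ℝ} (hε : 0 < ε) (hε₁ : ε ≤ 1) :
    ∫ x in Ioo 0 L ×ˢ Ioo (-H + δ) 0, f (x.1 / ε, -(x.2 + H) / ε) ^ 2
      ≤ exp (-(γ * (δ / ε))) ^ 2 * ε *
          ((L + 1) * ∫ y in Ioo 0 1 ×ˢ Iio 0, (exp (γ * |y.2|) * f y) ^ 2) := by
  set W : ℝ × ℝ → ℝ := fun y => (exp (γ * |y.2|) * f y) ^ 2
  set M := ∫ y in Ioo 0 1 ×ˢ Iio 0, W y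
  set c := exp (-(γ * (δ / ε))) ^ 2
  have hW : Measurable W := by fun_prop
  have hWper : ∀ b, Function.Periodic (fun a => ENNReal.ofReal (W (a, b))) 1 :=
    fun b a => by simp only [W, hper b a]
  have hM : ENNReal.ofReal M = ∫⁻ y in Ioo 0 1 ×ˢ Iio 0, ENNReal.ofReal (W y) :=
    ofReal_integral_eq_lintegral_ofReal hw (ae_of_all _ fun _ => sq_nonneg _)
  have hM₀ : 0 ≤ M := integral_nonneg fun _ => sq_nonneg _
  have hpt : ∀ x ∈ Ioo 0 L ×ˢ Ioo (-H + δ) 0, ENNReal.ofReal (f (x.1 / ε, -(x.2 + H) / ε) ^ 2)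
      ≤ ENNReal.ofReal c * ENNReal.ofReal (W (x.1 / ε, -(x.2 + H) / ε)) := by
    rintro x ⟨-, hx, -⟩
    have hdepth : δ / ε ≤ |-(x.2 + H) / ε| := by
      rw [abs_div, abs_neg, abs_of_pos (by linarith), abs_of_pos hε]
      gcongr; linarith
    rw [← ENNReal.ofReal_mul (by positivity)]
    exact ENNReal.ofReal_le_ofReal (sq_le_exp_mul_sq_of_le_abs hγ hdepth _)
  have hmeas : Measurable fun x : ℝ × ℝ => f (x.1 / ε, -(x.2 + H) / ε) ^ 2 := by fun_prop
  rw [integral_eq_lintegral_of_nonneg_ae (ae_of_all _ fun _ => sq_nonneg _)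
    hmeas.aestronglyMeasurable]
  refine ENNReal.toReal_le_of_le_ofReal (by positivity) ?_
  calc ∫⁻ x in Ioo 0 L ×ˢ Ioo (-H + δ) 0, ENNReal.ofReal (f (x.1 / ε, -(x.2 + H) / ε) ^ 2)
      ≤ ∫⁻ x in Ioo 0 L ×ˢ Ioo (-H + δ) 0,
          ENNReal.ofReal c * ENNReal.ofReal (W (x.1 / ε, -(x.2 + H) / ε)) :=
        setLIntegral_mono (by fun_prop) hpt
    _ = ENNReal.ofReal c *
          ∫⁻ x in Ioo 0 L ×ˢ Ioo (-H + δ) 0, ENNReal.ofReal (W (x.1 / ε, -(x.2 + H) / ε)) :=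
        lintegral_const_mul' _ _ ENNReal.ofReal_ne_top
    _ ≤ ENNReal.ofReal c *
          ∫⁻ x in Ioo 0 L ×ˢ Ioo (-H) 0, ENNReal.ofReal (W (x.1 / ε, -(x.2 + H) / ε)) := by
        gcongr; linarith
    _ ≤ ENNReal.ofReal c * (ENNReal.ofReal (ε * (L + 1)) * ENNReal.ofReal M) := by
        rw [hM]
        gcongr
        exact setLIntegral_rescale_le_of_periodic hW.ennreal_ofReal hWper hL H hε hε₁
    _ = ENNReal.ofReal (c * ε * ((L + 1) * M)) := by
        rw [← ENNReal.ofReal_mul (by positivity), ← ENNReal.ofReal_mul (by positivity)]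
        ring_nf

theorem outer_boundary_layer_scaling_general (L H : ℝ) (hL : 0 < L)
    (f : ℝ × ℝ → ℝ) (hmeas : Measurable f)
    (hper : ∀ y : ℝ × ℝ, f (y.1 + 1, y.2) = f y)
    (γ : ℝ) (hγ : γ ∈ Ioo (0:ℝ) 1)
    (hwL2 : IntegrableOn (fun y : ℝ × ℝ => (Real.exp (γ * |y.2|) * f y) ^ 2)
      (Ioo (0:ℝ) 1 ×ˢ Iio (0:ℝ))) :
    (∃ C' > 0, ∀ ε ∈ Ioo (0:ℝ) 1,
      Real.sqrt (∫ x in Ioo 0 L ×ˢ Ioo (-H) 0,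
          (f (x.1 / ε, -(x.2 + H) / ε)) ^ 2) ≤ C' * Real.sqrt ε) ∧
    (∀ δ > 0, ∃ Cδ > 0, ∀ ε ∈ Ioo (0:ℝ) 1,
      Real.sqrt (∫ x in Ioo 0 L ×ˢ Ioo (-H + δ) 0,
          (f (x.1 / ε, -(x.2 + H) / ε)) ^ 2) ≤
        Cδ * Real.exp (-(γ * δ) / (2 * ε))) := by
  set K := (L + 1) * ∫ y in Ioo (0:ℝ) 1 ×ˢ Iio (0:ℝ), (exp (γ * |y.2|) * f y) ^ 2
  have bound (δ : ℝ) (hδ : 0 ≤ δ) (ε : ℝ) (hε : ε ∈ Ioo (0:ℝ) 1) :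
      sqrt (∫ x in Ioo 0 L ×ˢ Ioo (-H + δ) 0, f (x.1 / ε, -(x.2 + H) / ε) ^ 2)
        ≤ exp (-(γ * (δ / ε))) * sqrt ε * sqrt K := by
    calc _ ≤ sqrt (exp (-(γ * (δ / ε))) ^ 2 * ε * K) :=
          sqrt_le_sqrt <| setIntegral_rescale_sq_le hmeas (fun b a => hper (a, b)) hγ.1.le hwL2
            hL.le H hδ hε.1 hε.2.le
      _ = _ := by
          rw [sqrt_mul (mul_nonneg (sq_nonneg _) hε.1.le), sqrt_mul (sq_nonneg _),
            sqrt_sq (exp_pos _).le]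
  have hC : 0 < sqrt K + 1 := by positivity
  refine ⟨⟨sqrt K + 1, hC, fun ε hε => ?_⟩, fun δ hδ => ⟨sqrt K + 1, hC, fun ε hε => ?_⟩⟩
  · calc _ ≤ sqrt ε * sqrt K := by simpa using bound 0 le_rfl ε hε
      _ ≤ (sqrt K + 1) * sqrt ε := by rw [mul_comm]; gcongr; linarith
  · calc _ ≤ exp (-(γ * (δ / ε))) * sqrt ε * sqrt K := bound δ hδ.le ε hε
      _ ≤ exp (-(γ * δ) / (2 * ε)) * 1 * (sqrt K + 1) := by
          gcongr
          · rw [neg_div, neg_le_neg_iff, mul_div_assoc]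
            gcongr <;> linarith [hγ.1, hε.1]
          · exact sqrt_le_one.2 hε.2.le
          · linarith
      _ = (sqrt K + 1) * exp (-(γ * δ) / (2 * ε)) := by ring

/-- Outer boundary layer scaling: if `f` is 1-periodic in `y₁` with
`e^{γ|y₂|} f ∈ L²((0,1) × (−∞,0))`, then the rescaling
`f^ε(x) = f(x₁/ε, −(x₂+H)/ε)` anchored at the bottom boundary satisfies
`‖f^ε‖_{L²((0,L)×(−H,0))} ≤ C' ε^{1/2}`, and for every `δ > 0` it is
exponentially small on `(0,L) × (−H+δ, 0)`:
`‖f^ε‖_{L²} ≤ C_δ e^{−γδ/(2ε)}`. -/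
theorem outer_boundary_layer_scaling (L H : ℝ) (hL : 0 < L) (hH : 0 < H)
    (f : ℝ × ℝ → ℝ) (hmeas : Measurable f)
    (hper : ∀ y : ℝ × ℝ, f (y.1 + 1, y.2) = f y)
    (γ : ℝ) (hγ : γ ∈ Ioo (0:ℝ) 1)
    (hwL2 : IntegrableOn (fun y : ℝ × ℝ => (Real.exp (γ * |y.2|) * f y) ^ 2)
      (Ioo (0:ℝ) 1 ×ˢ Iio (0:ℝ))) :
    (∃ C' > 0, ∀ ε ∈ Ioo (0:ℝ) 1,
      Real.sqrt (∫ x in Ioo 0 L ×ˢ Ioo (-H) 0,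
          (f (x.1 / ε, -(x.2 + H) / ε)) ^ 2) ≤ C' * Real.sqrt ε) ∧
    (∀ δ > 0, ∃ Cδ > 0, ∀ ε ∈ Ioo (0:ℝ) 1,
      Real.sqrt (∫ x in Ioo 0 L ×ˢ Ioo (-H + δ) 0,
          (f (x.1 / ε, -(x.2 + H) / ε)) ^ 2) ≤
        Cδ * Real.exp (-(γ * δ) / (2 * ε))) :=
  outer_boundary_layer_scaling_general L H hL f hmeas hper γ hγ hwL2
end
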